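/- Let G be a commutative group (written multiplicatively) and F : ℤ × ℤ → G a function such that (i) F(a,b) = F(b,a) for all a,b; (ii) F(a,b) · F(−a,−b) = 1 for all a,b; (iii) F(a,b) · F(−a, 1−b) = F(0,1) for all a,b. Then F(a,b) = F(0,1)^{a+b} for all integers a, b. -/

import Mathlib

/-! Negating both arguments of (iii) and dividing by (ii) gives the recursion
`F(a, b + 1) = F(0,1) · F(a, b)`, hence `F(a, b) = F(0,1)^b · F(a, 0)`. Its case `a = b = 0` gives
`F(0, 0) = 1`, and symmetry turns `F(a, 0)` into `F(0, a) = F(0,1)^a`. -/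

theorem eq_zpow_mul_of_map_add_one {G : Type*} [Group G] {c : G} {f : ℤ → G}
    (h : ∀ n, f (n + 1) = c * f n) (n : ℤ) : f n = c ^ n * f 0 := by
  induction n using Int.induction_on with
  | zero => simp
  | succ k ih => rw [h, ih, ← mul_assoc, ← zpow_one_add, add_comm]
  | pred k ih =>
    rw [← inv_mul_cancel_left c (f (-k - 1)), ← h, sub_add_cancel, ih, ← mul_assoc,
      ← zpow_neg_one, ← zpow_add, neg_add_eq_sub]

theorem map_snd_add_one {G : Type*} [CommGroup G] {F : ℤ × ℤ → G}
    (h2 : ∀ a b : ℤ, F (a, b) * F (-a, -b) = 1)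
    (h3 : ∀ a b : ℤ, F (a, b) * F (-a, 1 - b) = F (0, 1)) (a b : ℤ) :
    F (a, b + 1) = F (0, 1) * F (a, b) := by
  have hneg : F (-a, -b) = (F (a, b))⁻¹ := eq_inv_of_mul_eq_one_right (h2 a b)
  have h := h3 (-a) (-b)
  rw [neg_neg, sub_neg_eq_add, add_comm, hneg] at h
  rw [← h, mul_comm, mul_inv_cancel_left]

/-- If `F : ℤ × ℤ → G` (with `G` a commutative group) is symmetric, satisfies
`F(a,b)·F(-a,-b) = 1` and `F(a,b)·F(-a,1-b) = F(0,1)`, then `F(a,b) = F(0,1)^(a+b)`. -/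
theorem stmt_8 (G : Type*) [CommGroup G] (F : ℤ × ℤ → G)
    (h1 : ∀ a b : ℤ, F (a, b) = F (b, a))
    (h2 : ∀ a b : ℤ, F (a, b) * F (-a, -b) = 1)
    (h3 : ∀ a b : ℤ, F (a, b) * F (-a, 1 - b) = F (0, 1)) :
    ∀ a b : ℤ, F (a, b) = F (0, 1) ^ (a + b) := by
  set c := F (0, 1)
  have hstep := map_snd_add_one h2 h3
  have hrow (a b : ℤ) : F (a, b) = c ^ b * F (a, 0) :=
    eq_zpow_mul_of_map_add_one (f := fun b ↦ F (a, b)) (hstep a) b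
  have h00 : F (0, 0) = 1 := by simpa using (hstep 0 0).symm
  intro a b
  rw [hrow a b, h1 a 0, hrow 0 a, h00, mul_one, zpow_add, mul_comm]
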